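/- arXiv:1510.00639 — 6 statements merged into one kernel-verified Lean document; each statement's English description precedes it below -/
import Mathlib

section
/- Let p and q be finite lists of rationals with p an initial segment of q, and let (a, b) and (c, d) be open real intervals. If q i ∈ (a, b) for every index i with length p ≤ i < length q, then S(p, (a, b)) ∩ S(q, (c, d)) = S(q, (a, b) ∩ (c, d)). -/
/-- A sequence of rationals is Cauchy: for every rational `ε > 0` there is `N`
such that `|x m - x n| < ε` for all `m, n ≥ N`. -/
def RatCauchy (x : ℕ → ℚ) : Prop :=
  ∀ ε : ℚ, 0 < ε → ∃ N : ℕ, ∀ m n : ℕ, N ≤ m → N ≤ n → |x m - x n| < ε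

/-- `x` is compatible with the condition `(p, I)`: `p` is an initial segment of `x`,
all entries of `x` from position `p.length` on lie in `I`, and `lim x ∈ I`. -/
def Compatible (x : ℕ → ℚ) (p : List ℚ) (I : Set ℝ) : Prop :=
  (∀ i : ℕ, ∀ h : i < p.length, x i = p.get ⟨i, h⟩) ∧
  (∀ n : ℕ, p.length ≤ n → ((x n : ℝ)) ∈ I) ∧
  ∃ L : ℝ, Filter.Tendsto (fun n => ((x n : ℝ))) Filter.atTop (nhds L) ∧ L ∈ I

/-- `S p I` is the set of Cauchy sequences of rationals compatible with `(p, I)`. -/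
def S (p : List ℚ) (I : Set ℝ) : Set (ℕ → ℚ) :=
  {x | RatCauchy x ∧ Compatible x p I}

theorem stmt4 (p q : List ℚ) (a b c d : ℝ)
    (hpq : p <+: q)
    (hq : ∀ i : ℕ, ∀ h : i < q.length, p.length ≤ i → ((q.get ⟨i, h⟩ : ℝ)) ∈ Set.Ioo a b) :
    S p (Set.Ioo a b) ∩ S q (Set.Ioo c d) = S q (Set.Ioo a b ∩ Set.Ioo c d) := by
  have hlen : p.length ≤ q.length := hpq.length_le
  have hgetpq : ∀ i : ℕ, ∀ h : i < p.length, p.get ⟨i, h⟩ = q.get ⟨i, lt_of_lt_of_le h hlen⟩ := by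
    intro i h
    simpa using List.IsPrefix.getElem hpq h
  ext x
  constructor
  · rintro ⟨⟨hc, hini, hmem, L, hL, hLab⟩, _, hini', hmem', L', hL', hL'cd⟩
    have hLL : L = L' := tendsto_nhds_unique hL hL'
    refine ⟨hc, hini', fun n hn => ⟨hmem n (le_trans hlen hn), hmem' n hn⟩,
      L, hL, hLab, hLL ▸ hL'cd⟩
  · rintro ⟨hc, hini, hmem, L, hL, hLab, hLcd⟩
    refine ⟨⟨hc, ?_, ?_, L, hL, hLab⟩, hc, hini, fun n hn => (hmem n hn).2, L, hL, hLcd⟩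
    · intro i h
      rw [hini i (lt_of_lt_of_le h hlen), hgetpq i h]
    · intro n hn
      rcases lt_or_ge n q.length with h | h
      · rw [hini n h]
        exact hq n h hn
      · exact (hmem n h).1
end

section
/- Let p and q be finite lists of rationals and let (a, b) and (c, d) be open real intervals. (i) If neither p is an initial segment of q nor q an initial segment of p, then S(p, (a, b)) ∩ S(q, (c, d)) = ∅. (ii) If p is an initial segment of q and some entry q i with length p ≤ i < length q satisfies q i ∉ (a, b), then S(p, (a, b)) ∩ S(q, (c, d)) = ∅. -/
lemma prefix_of_both {x : ℕ → ℚ} {p q : List ℚ}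
    (hp : ∀ i : ℕ, ∀ h : i < p.length, x i = p.get ⟨i, h⟩)
    (hq : ∀ i : ℕ, ∀ h : i < q.length, x i = q.get ⟨i, h⟩)
    (hl : p.length ≤ q.length) : p <+: q := by
  rw [List.prefix_iff_eq_take]
  apply List.ext_get
  · simp [Nat.min_eq_left hl]
  · intro n h1 h2
    have hn : n < p.length := h1
    have hn' : n < q.length := lt_of_lt_of_le hn hl
    simp only [List.get_eq_getElem, List.getElem_take]
    have := hp n hn; have := hq n hn'
    simp only [List.get_eq_getElem] at *
    rw [← ‹x n = p[n]›, ← ‹x n = q[n]›]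

theorem stmt5 (p q : List ℚ) (a b c d : ℝ) :
    ((¬ p <+: q ∧ ¬ q <+: p) →
      S p (Set.Ioo a b) ∩ S q (Set.Ioo c d) = ∅) ∧
    (p <+: q →
      (∃ i : ℕ, ∃ h : i < q.length, p.length ≤ i ∧ ((q.get ⟨i, h⟩ : ℝ)) ∉ Set.Ioo a b) →
      S p (Set.Ioo a b) ∩ S q (Set.Ioo c d) = ∅) := by
  constructor
  · rintro ⟨h1, h2⟩
    ext x
    simp only [Set.mem_inter_iff, Set.mem_empty_iff_false, iff_false]
    rintro ⟨⟨_, hp, _, _⟩, ⟨_, hq, _, _⟩⟩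
    rcases le_total p.length q.length with hl | hl
    · exact h1 (prefix_of_both hp hq hl)
    · exact h2 (prefix_of_both hq hp hl)
  · rintro hpre ⟨i, hi, hpi, hni⟩
    ext x
    simp only [Set.mem_inter_iff, Set.mem_empty_iff_false, iff_false]
    rintro ⟨⟨_, _, hmem, _⟩, ⟨_, hq, _, _⟩⟩
    apply hni
    rw [← hq i hi]
    exact hmem i hpi
end

section
/- If a Cauchy sequence r : ℕ → ℚ is compatible with conditions (p, I) and (q, J), and length p ≤ length q, then p is an initial segment of q, the condition (q, I ∩ J) extends both (p, I) and (q, J), and r is compatible with (q, I ∩ J); in particular, any two conditions compatible with a common Cauchy sequence are compatible with each other, with greatest lower bound (p ∪ q, I ∩ J). -/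
/-- The condition `(q, J)` extends the condition `(p, I)`. -/
def CondExt (q : List ℚ) (J : Set ℝ) (p : List ℚ) (I : Set ℝ) : Prop :=
  p <+: q ∧ J ⊆ I ∧
  ∀ i : ℕ, ∀ h : i < q.length, p.length ≤ i → ((q.get ⟨i, h⟩ : ℝ)) ∈ I

theorem stmt8 (r : ℕ → ℚ) (hr : RatCauchy r) (p q : List ℚ) (I J : Set ℝ)
    (hp : Compatible r p I) (hq : Compatible r q J) (hlen : p.length ≤ q.length) :
    p <+: q ∧
    CondExt q (I ∩ J) p I ∧
    CondExt q (I ∩ J) q J ∧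
    Compatible r q (I ∩ J) := by
  obtain ⟨hp1, hp2, Lp, hLp, hLpI⟩ := hp
  obtain ⟨hq1, hq2, Lq, hLq, hLqJ⟩ := hq
  have hLe : Lp = Lq := tendsto_nhds_unique hLp hLq
  have hpre : p <+: q := by
    refine List.prefix_iff_eq_take.2 ?_
    apply List.ext_get
    · simp [hlen]
    · intro i h1 h2
      have hip : i < p.length := h1
      have hiq : i < q.length := lt_of_lt_of_le hip hlen
      rw [← hp1 i hip]
      simp only [List.get_eq_getElem, List.getElem_take]
      exact hq1 i hiq
  have hqI : ∀ i : ℕ, ∀ h : i < q.length, p.length ≤ i → ((q.get ⟨i, h⟩ : ℝ)) ∈ I := by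
    intro i h hi
    rw [← hq1 i h]
    exact hp2 i hi
  refine ⟨hpre, ⟨hpre, Set.inter_subset_left, hqI⟩,
    ⟨List.prefix_refl q, Set.inter_subset_right, fun i h hi => absurd h (not_lt.2 hi)⟩,
    hq1, fun n hn => ⟨hp2 n (le_trans hlen hn), hq2 n hn⟩,
    Lq, hLq, hLe ▸ hLpI, hLqJ⟩
end

section
/- Suppose a family C of conditions covers (p, I) and (q, J) ≤ (p, I). Then for every Cauchy sequence r compatible with (q, J) there exists (p', I') ∈ C such that, letting u be the longer of the two lists p' and q (both are initial segments of r), the condition (u, I' ∩ J) extends (q, J) and r is compatible with (u, I' ∩ J); hence the family C ∧ (q, J) of all such conditions (u, I' ∩ J) covers (q, J). -/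
/-- A family `C` of conditions covers `(p, I)`: every member of `C` extends `(p, I)`,
and every Cauchy sequence compatible with `(p, I)` is compatible with some member of `C`. -/
def Covers (C : Set (List ℚ × Set ℝ)) (p : List ℚ) (I : Set ℝ) : Prop :=
  (∀ c ∈ C, CondExt c.1 c.2 p I) ∧
  ∀ x : ℕ → ℚ, RatCauchy x → Compatible x p I → ∃ c ∈ C, Compatible x c.1 c.2

/-- The longer of two lists (the second in case of equal lengths). -/
def longer (u v : List ℚ) : List ℚ := if u.length ≤ v.length then v else u

lemma prefix_of_init {r : ℕ → ℚ} {u v : List ℚ}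
    (hu : ∀ i : ℕ, ∀ h : i < u.length, r i = u.get ⟨i, h⟩)
    (hv : ∀ i : ℕ, ∀ h : i < v.length, r i = v.get ⟨i, h⟩)
    (hlen : u.length ≤ v.length) : u <+: v := by
  rw [List.prefix_iff_eq_take]
  apply List.ext_get
  · simp [Nat.min_eq_left hlen]
  · intro i h1 h2
    have hi : i < u.length := h1
    have hiv : i < v.length := lt_of_lt_of_le hi hlen
    rw [← hu i hi]
    simp only [List.get_eq_getElem, List.getElem_take]
    exact hv i hiv

lemma compat_mono {r : ℕ → ℚ} {q : List ℚ} {J : Set ℝ} {p : List ℚ} {I : Set ℝ}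
    (hr : Compatible r q J) (h : CondExt q J p I) : Compatible r p I := by
  obtain ⟨h1, h2, L, hL, hLJ⟩ := hr
  obtain ⟨hpq, hJI, hmid⟩ := h
  have hlen := hpq.length_le
  refine ⟨?_, ?_, L, hL, hJI hLJ⟩
  · intro i hi
    have hiq : i < q.length := lt_of_lt_of_le hi hlen
    rw [h1 i hiq]
    simp only [List.get_eq_getElem]
    exact (hpq.getElem hi).symm
  · intro n hn
    rcases lt_or_ge n q.length with hlt | hge
    · rw [h1 n hlt]
      exact hmid n hlt hn
    · exact hJI (h2 n hge)

theorem stmt10 (C : Set (List ℚ × Set ℝ)) (p q : List ℚ) (I J : Set ℝ)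
    (hC : Covers C p I) (hqJ : CondExt q J p I) :
    (∀ r : ℕ → ℚ, RatCauchy r → Compatible r q J →
      ∃ c ∈ C, Compatible r c.1 c.2 ∧
        CondExt (longer c.1 q) (c.2 ∩ J) q J ∧
        Compatible r (longer c.1 q) (c.2 ∩ J)) ∧
    Covers {d : List ℚ × Set ℝ |
        ∃ c ∈ C, d = (longer c.1 q, c.2 ∩ J) ∧ CondExt d.1 d.2 q J}
      q J := by
  have main : ∀ r : ℕ → ℚ, RatCauchy r → Compatible r q J →
      ∃ c ∈ C, Compatible r c.1 c.2 ∧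
        CondExt (longer c.1 q) (c.2 ∩ J) q J ∧
        Compatible r (longer c.1 q) (c.2 ∩ J) := by
    intro r hr hrq
    have hrp : Compatible r p I := compat_mono hrq hqJ
    obtain ⟨c, hcC, hrc⟩ := hC.2 r hr hrp
    refine ⟨c, hcC, hrc, ?_⟩
    obtain ⟨hq1, hq2, Lq, hLq, hLqJ⟩ := hrq
    obtain ⟨hc1, hc2, Lc, hLc, hLcI⟩ := hrc
    have hLeq : Lc = Lq := tendsto_nhds_unique hLc hLq
    by_cases hle : c.1.length ≤ q.length
    · have hL : longer c.1 q = q := if_pos hle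
      rw [hL]
      refine ⟨⟨List.prefix_refl q, Set.inter_subset_right, ?_⟩,
        hq1, ?_, Lq, hLq, hLeq ▸ hLcI, hLqJ⟩
      · intro i hi hqi; omega
      · intro n hn
        exact ⟨hc2 n (le_trans hle hn), hq2 n hn⟩
    · have hL : longer c.1 q = c.1 := if_neg hle
      rw [hL]
      have hqpre : q <+: c.1 := prefix_of_init hq1 hc1 (by omega)
      refine ⟨⟨hqpre, Set.inter_subset_right, ?_⟩,
        hc1, ?_, Lq, hLq, hLeq ▸ hLcI, hLqJ⟩
      · intro i hi hqi
        rw [← hc1 i hi]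
        exact hq2 i hqi
      · intro n hn
        exact ⟨hc2 n hn, hq2 n (by omega)⟩
  refine ⟨main, ?_, ?_⟩
  · rintro d ⟨c, hcC, rfl, hext⟩
    exact hext
  · intro x hx hxq
    obtain ⟨c, hcC, hxc, hext, hcomp⟩ := main x hx hxq
    exact ⟨(longer c.1 q, c.2 ∩ J), ⟨c, hcC, rfl, hext⟩, hcomp⟩
end

section
/- For every finite list q of rationals and all real numbers a < b, S(q, (a, b)) = ⋃_{c ∈ ℝ, a < c < b} S(q, (a, c)); that is, a Cauchy sequence x of rationals is compatible with (q, (a, b)) if and only if it is compatible with (q, (a, c)) for some real c with a < c < b. -/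
lemma compat_forward (q : List ℚ) (a b : ℝ) (x : ℕ → ℚ)
    (h : Compatible x q (Set.Ioo a b)) :
    ∃ c : ℝ, a < c ∧ c < b ∧ Compatible x q (Set.Ioo a c) := by
  obtain ⟨hpre, hmem, L, hL, hLa, hLb⟩ := h
  have hmid : L < (L + b) / 2 := by linarith
  have hmidb : (L + b) / 2 < b := by linarith
  have hev : ∀ᶠ n in Filter.atTop, (x n : ℝ) < (L + b) / 2 :=
    hL.eventually (eventually_lt_nhds hmid)
  obtain ⟨N, hN⟩ := Filter.eventually_atTop.mp hev
  set F : Finset ℝ :=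
    insert ((L + b) / 2) ((Finset.Ico q.length N).image (fun n => (x n : ℝ))) with hF
  have hFne : F.Nonempty := ⟨(L + b) / 2, Finset.mem_insert_self _ _⟩
  set M : ℝ := F.max' hFne with hM
  have hmidM : (L + b) / 2 ≤ M := Finset.le_max' _ _ (Finset.mem_insert_self _ _)
  have hMb : M < b := by
    have := F.max'_mem hFne
    rw [← hM] at this
    rcases Finset.mem_insert.mp this with h | h
    · rw [h]; exact hmidb
    · obtain ⟨n, hn, hxn⟩ := Finset.mem_image.mp h
      rw [← hxn]
      exact (hmem n (Finset.mem_Ico.mp hn).1).2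
  refine ⟨(M + b) / 2, ?_, by linarith, hpre, ?_, L, hL, hLa, by linarith⟩
  · linarith
  · intro n hn
    refine ⟨(hmem n hn).1, ?_⟩
    rcases lt_or_ge n N with h | h
    · have : (x n : ℝ) ≤ M := by
        apply Finset.le_max'
        exact Finset.mem_insert_of_mem
          (Finset.mem_image_of_mem _ (Finset.mem_Ico.mpr ⟨hn, h⟩))
      linarith
    · have := hN n h
      linarith

theorem stmt12 (q : List ℚ) (a b : ℝ) (hab : a < b) :
    (S q (Set.Ioo a b) = ⋃ c ∈ Set.Ioo a b, S q (Set.Ioo a c)) ∧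
    (∀ x : ℕ → ℚ, RatCauchy x →
      (Compatible x q (Set.Ioo a b) ↔
        ∃ c : ℝ, a < c ∧ c < b ∧ Compatible x q (Set.Ioo a c))) := by
  have back : ∀ x : ℕ → ℚ, ∀ c : ℝ, c < b → Compatible x q (Set.Ioo a c) →
      Compatible x q (Set.Ioo a b) := by
    intro x c hcb ⟨hpre, hmem, L, hL, hLa, hLc⟩
    exact ⟨hpre, fun n hn => ⟨(hmem n hn).1, lt_trans (hmem n hn).2 hcb⟩,
      L, hL, hLa, lt_trans hLc hcb⟩
  constructor
  · ext x
    simp only [Set.mem_iUnion, S, Set.mem_setOf_eq, Set.mem_Ioo]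
    constructor
    · rintro ⟨hc, hcomp⟩
      obtain ⟨c, hac, hcb, h⟩ := compat_forward q a b x hcomp
      exact ⟨c, ⟨hac, hcb⟩, hc, h⟩
    · rintro ⟨c, ⟨_, hcb⟩, hc, h⟩
      exact ⟨hc, back x c hcb h⟩
  · intro x _
    constructor
    · exact compat_forward q a b x
    · rintro ⟨c, _, hcb, h⟩
      exact back x c hcb h
end

section
/- For every basic open subset p of T and every X ∈ p, there exists a basic open set q in canonical form with X ∈ q and q ⊆ p; consequently every basic open subset of T is a union of basic open sets in canonical form. -/
/-- The real limit of a sequence of rationals (meaningful when the sequence is Cauchy). -/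
noncomputable def rlim (x : ℕ → ℚ) : ℝ :=
  Filter.limUnder Filter.atTop (fun n => ((x n : ℝ)))

/-- Membership in the space `T`: each `X j` is a Cauchy sequence of rationals, and
the sequence of limits has convergence function `2 ^ (-n)`. -/
def InT (X : ℕ → ℕ → ℚ) : Prop :=
  (∀ j, RatCauchy (X j)) ∧
  ∀ n j k : ℕ, n ≤ j → n ≤ k → |rlim (X j) - rlim (X k)| ≤ (2 : ℝ) ^ (-(n : ℤ))

/-- The data of a basic open set: a natural number `n`, for each `j < n` a finite
list `p j` of rationals and an open interval `(lo j, hi j)`, and a final open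
interval `(Lo, Hi)`. -/
structure BOpen where
  n : ℕ
  p : ℕ → List ℚ
  lo : ℕ → ℝ
  hi : ℕ → ℝ
  Lo : ℝ
  Hi : ℝ

/-- The set of points of `T` belonging to the basic open set `c`. -/
def BOSet (c : BOpen) : Set (ℕ → ℕ → ℚ) :=
  {X | InT X ∧
    (∀ j : ℕ, j < c.n →
      ((∀ i : ℕ, ∀ h : i < (c.p j).length, X j i = (c.p j).get ⟨i, h⟩) ∧
       (∀ i : ℕ, (c.p j).length ≤ i → ((X j i : ℝ)) ∈ Set.Ioo (c.lo j) (c.hi j)) ∧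
       rlim (X j) ∈ Set.Ioo (c.lo j) (c.hi j))) ∧
    (∀ j : ℕ, c.n ≤ j → rlim (X j) ∈ Set.Ioo c.Lo c.Hi) ∧
    ∃ L : ℝ, Filter.Tendsto (fun j => rlim (X j)) Filter.atTop (nhds L) ∧
      L ∈ Set.Ioo c.Lo c.Hi}

/-- A basic open set is in canonical form if `|hi j - hi k| ≤ 2 ^ (-j)` for all
`j < k < n` and `|hi j - Hi| ≤ 2 ^ (-j)` for all `j < n`. -/
def CanonicalForm (c : BOpen) : Prop :=
  (∀ j k : ℕ, j < k → k < c.n → |c.hi j - c.hi k| ≤ (2 : ℝ) ^ (-(j : ℤ))) ∧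
  ∀ j : ℕ, j < c.n → |c.hi j - c.Hi| ≤ (2 : ℝ) ^ (-(j : ℤ))

/-!
Let `r j = lim X_j` and `L = lim r j`, so that `|r j - L| ≤ 2^{-j}`. Pick `δ > 0` leaving room
`r j + δ < hi j` for `j < n` and `L + δ < Hi`, then `N ≥ n` with `2^{-N} < δ`. The refined set
uses `N` levels, the upper bounds `min (r j + δ) (upper bound of c at level j)` and final upper
bound `L + δ`, with long enough initial segments of `X_j` as prefixes. Each of its upper bounds
lies in `[min (r j) L + δ, r j + δ]`, which forces canonical form.
-/

open Filter Set Topology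

lemma tendsto_rlim {x : ℕ → ℚ} (hx : RatCauchy x) :
    Tendsto (fun n => (x n : ℝ)) atTop (𝓝 (rlim x)) := by
  have hc : CauchySeq (fun n => (x n : ℝ)) := by
    refine Metric.cauchySeq_iff.2 fun ε hε => ?_
    obtain ⟨q, hq0, hqε⟩ := exists_rat_btwn hε
    obtain ⟨N, hN⟩ := hx q (by exact_mod_cast hq0)
    refine ⟨N, fun m hm n hn => ?_⟩
    rw [Real.dist_eq]
    exact lt_trans (by exact_mod_cast hN m n hm hn) hqε
  obtain ⟨l, hl⟩ := cauchySeq_tendsto_of_complete hc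
  rwa [rlim, hl.limUnder_eq]

lemma RatCauchy.exists_ge_forall_mem {x : ℕ → ℚ} (hx : RatCauchy x) {s : Set ℝ} (hs : IsOpen s)
    (h : rlim x ∈ s) (k : ℕ) : ∃ m ≥ k, ∀ i ≥ m, (x i : ℝ) ∈ s := by
  obtain ⟨m, hm⟩ := eventually_atTop.1
    (((tendsto_rlim hx).eventually (hs.mem_nhds h)).and (eventually_ge_atTop k))
  exact ⟨m, (hm m le_rfl).2, fun i hi => (hm i hi).1⟩

lemma exists_pos_forall_lt_and_lt {n : ℕ} {a : ℕ → ℝ} {b : ℝ} (ha : ∀ j < n, 0 < a j)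
    (hb : 0 < b) : ∃ δ > 0, (∀ j < n, δ < a j) ∧ δ < b := by
  have hev : ∀ᶠ δ in 𝓝 (0 : ℝ), (∀ j ∈ Finset.range n, δ < a j) ∧ δ < b :=
    ((Finset.range n).eventually_all.2 fun j hj =>
      eventually_lt_nhds (ha j (Finset.mem_range.1 hj))).and (eventually_lt_nhds hb)
  obtain ⟨δ, ⟨hδa, hδb⟩, hδ⟩ :=
    ((hev.filter_mono (nhdsWithin_le_nhds (s := Ioi 0))).and self_mem_nhdsWithin).exists
  exact ⟨δ, hδ, fun j hj => hδa j (Finset.mem_range.2 hj), hδb⟩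

lemma two_zpow_neg_anti {j k : ℕ} (h : j ≤ k) : (2 : ℝ) ^ (-(k : ℤ)) ≤ 2 ^ (-(j : ℤ)) :=
  zpow_le_zpow_right₀ one_le_two (by omega)

lemma InT.abs_rlim_sub_le {X : ℕ → ℕ → ℚ} (hX : InT X) {L : ℝ}
    (hL : Tendsto (fun j => rlim (X j)) atTop (𝓝 L)) (j : ℕ) :
    |rlim (X j) - L| ≤ 2 ^ (-(j : ℤ)) :=
  le_of_tendsto ((tendsto_const_nhds.sub hL).abs)
    ((eventually_ge_atTop j).mono fun _ hk => hX.2 j j _ le_rfl hk)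

lemma abs_sub_le_of_mem_Icc_min {a b r s L ε : ℝ} (ha : a ∈ Icc (min r L) r)
    (hb : b ∈ Icc (min s L) s) (hrs : |r - s| ≤ ε) (hr : |r - L| ≤ ε) (hs : |s - L| ≤ ε) :
    |a - b| ≤ ε := by
  rw [abs_le] at *
  obtain ⟨ha₁, ha₂⟩ := ha
  obtain ⟨hb₁, hb₂⟩ := hb
  constructor
  · rcases min_choice r L with h | h <;> rw [h] at ha₁ <;> linarith
  · rcases min_choice s L with h | h <;> rw [h] at hb₁ <;> linarith

namespace BOpen

variable (c : BOpen)

def lowerAt (j : ℕ) : ℝ := if j < c.n then c.lo j else c.Lo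

def upperAt (j : ℕ) : ℝ := if j < c.n then c.hi j else c.Hi

variable {c}

lemma mem_BOSet_iff {X : ℕ → ℕ → ℚ} : X ∈ BOSet c ↔ InT X ∧
    (∀ j < c.n, (∀ i (h : i < (c.p j).length), X j i = (c.p j).get ⟨i, h⟩) ∧
      ∀ i, (c.p j).length ≤ i → (X j i : ℝ) ∈ Ioo (c.lo j) (c.hi j)) ∧
    (∀ j, rlim (X j) ∈ Ioo (c.lowerAt j) (c.upperAt j)) ∧
    ∃ L, Tendsto (fun j => rlim (X j)) atTop (𝓝 L) ∧ L ∈ Ioo c.Lo c.Hi := by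
  constructor
  · rintro ⟨hT, hlt, hge, hL⟩
    refine ⟨hT, fun j hj => ⟨(hlt j hj).1, (hlt j hj).2.1⟩, fun j => ?_, hL⟩
    unfold lowerAt upperAt
    split_ifs with hj
    exacts [(hlt j hj).2.2, hge j (not_lt.1 hj)]
  · rintro ⟨hT, hlt, hr, hL⟩
    refine ⟨hT, fun j hj => ⟨(hlt j hj).1, (hlt j hj).2, ?_⟩, fun j hj => ?_, hL⟩
    · simpa [lowerAt, upperAt, hj] using hr j
    · simpa [lowerAt, upperAt, hj.not_gt] using hr j

noncomputable def shrink (c : BOpen) (X : ℕ → ℕ → ℚ) (N : ℕ) (M : ℕ → ℕ) (L δ : ℝ) : BOpen where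
  n := N
  p j := (List.range (M j)).map (X j)
  lo := c.lowerAt
  hi j := min (rlim (X j) + δ) (c.upperAt j)
  Lo := c.Lo
  Hi := L + δ

variable {X : ℕ → ℕ → ℚ} {N : ℕ} {M : ℕ → ℕ} {L δ : ℝ}

lemma lowerAt_shrink (hN : c.n ≤ N) (j : ℕ) : (c.shrink X N M L δ).lowerAt j = c.lowerAt j := by
  change (if j < N then c.lowerAt j else c.Lo) = c.lowerAt j
  split_ifs with hj
  · rfl
  · simp [lowerAt, show ¬j < c.n by omega]

lemma upperAt_shrink (j : ℕ) : (c.shrink X N M L δ).upperAt j =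
    if j < N then min (rlim (X j) + δ) (c.upperAt j) else L + δ := rfl

lemma upperAt_shrink_le (hN : c.n ≤ N) (hLδ : L + δ ≤ c.Hi) (j : ℕ) :
    (c.shrink X N M L δ).upperAt j ≤ c.upperAt j := by
  rw [upperAt_shrink]
  split_ifs with hj
  · exact min_le_right _ _
  · simpa [upperAt, show ¬j < c.n by omega] using hLδ

lemma canonicalForm_shrink (hX : InT X) (hL : Tendsto (fun j => rlim (X j)) atTop (𝓝 L))
    (hδ : ∀ j, min (rlim (X j)) L + δ ≤ c.upperAt j) : CanonicalForm (c.shrink X N M L δ) := by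
  have hmem : ∀ j, (c.shrink X N M L δ).hi j - δ ∈ Icc (min (rlim (X j)) L) (rlim (X j)) :=
    fun j => ⟨le_sub_iff_add_le.2 (le_min (by linarith [min_le_left (rlim (X j)) L]) (hδ j)),
      sub_le_iff_le_add.2 (min_le_left _ _)⟩
  have hLL : L ∈ Icc (min L L) L := by simp
  refine ⟨fun j k hjk _ => ?_, fun j _ => ?_⟩
  · rw [← sub_sub_sub_cancel_right _ _ δ]
    exact abs_sub_le_of_mem_Icc_min (hmem j) (hmem k) (hX.2 j j k le_rfl hjk.le)
      (hX.abs_rlim_sub_le hL j) ((hX.abs_rlim_sub_le hL k).trans (two_zpow_neg_anti hjk.le))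
  · rw [← sub_sub_sub_cancel_right _ _ δ]
    simpa [shrink] using abs_sub_le_of_mem_Icc_min (hmem j) hLL (hX.abs_rlim_sub_le hL j)
      (hX.abs_rlim_sub_le hL j) (by simp)

lemma mem_shrink (hX : X ∈ BOSet c) (hL : Tendsto (fun j => rlim (X j)) atTop (𝓝 L))
    (hN : c.n ≤ N) (hδ : 0 < δ) (hNδ : (2 : ℝ) ^ (-(N : ℤ)) < δ)
    (hM : ∀ j, ∀ i ≥ M j, (X j i : ℝ) ∈ Ioo (c.lowerAt j) (min (rlim (X j) + δ) (c.upperAt j))) :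
    X ∈ BOSet (c.shrink X N M L δ) := by
  obtain ⟨hT, -, hr, L', hL', hL'c⟩ := mem_BOSet_iff.1 hX
  obtain rfl := tendsto_nhds_unique hL' hL
  refine mem_BOSet_iff.2 ⟨hT, fun j _ => ⟨fun i _ => by simp [shrink],
    fun i hi => hM j i (by simpa [shrink] using hi)⟩, fun j => ?_, L', hL, hL'c.1,
    show L' < L' + δ by linarith⟩
  rw [lowerAt_shrink hN]
  refine ⟨(hr j).1, ?_⟩
  rw [upperAt_shrink]
  split_ifs with hj
  · exact lt_min (by linarith) (hr j).2
  · have := (abs_le.1 (hT.abs_rlim_sub_le hL j)).2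
    have := two_zpow_neg_anti (not_lt.1 hj)
    linarith

lemma shrink_subset (hX : X ∈ BOSet c) (hN : c.n ≤ N) (hM : ∀ j, (c.p j).length ≤ M j)
    (hLδ : L + δ ≤ c.Hi) : BOSet (c.shrink X N M L δ) ⊆ BOSet c := by
  obtain ⟨-, hXc, -, -⟩ := mem_BOSet_iff.1 hX
  intro Y hY
  obtain ⟨hT, hYd, hr, LY, hLY, hLYd⟩ := mem_BOSet_iff.1 hY
  refine mem_BOSet_iff.2 ⟨hT, fun j hj => ?_, fun j => ?_, LY, hLY, hLYd.1, hLYd.2.trans_le hLδ⟩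
  · obtain ⟨hpre, htail⟩ := hYd j (hj.trans_le hN)
    have hagree : ∀ i < M j, Y j i = X j i := fun i hi => by
      simpa [shrink] using hpre i (by simpa [shrink] using hi)
    refine ⟨fun i h => (hagree i (h.trans_le (hM j))).trans ((hXc j hj).1 i h), fun i hi => ?_⟩
    rcases lt_or_ge i (M j) with hiM | hiM
    · rw [hagree i hiM]
      exact (hXc j hj).2 i hi
    · have := htail i (by simpa [shrink] using hiM)
      simp only [shrink, lowerAt, upperAt, if_pos hj] at this
      exact ⟨this.1, this.2.trans_le (min_le_right _ _)⟩
  · rw [← lowerAt_shrink hN]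
    exact ⟨(hr j).1, (hr j).2.trans_le (upperAt_shrink_le hN hLδ j)⟩

end BOpen

open BOpen in
lemma exists_canonicalForm_mem_subset (c : BOpen) (X : ℕ → ℕ → ℚ) (hX : X ∈ BOSet c) :
    ∃ d : BOpen, CanonicalForm d ∧ X ∈ BOSet d ∧ BOSet d ⊆ BOSet c := by
  obtain ⟨hT, -, hr, L, hL, hLc⟩ := mem_BOSet_iff.1 hX
  obtain ⟨δ, hδ, hδr, hδL⟩ :=
    exists_pos_forall_lt_and_lt (n := c.n) (a := fun j => c.hi j - rlim (X j))
    (fun j hj => sub_pos.2 (by simpa [upperAt, hj] using (hr j).2)) (sub_pos.2 hLc.2)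
  obtain ⟨N, hNδ, hN⟩ : ∃ N : ℕ, (2 : ℝ) ^ (-(N : ℤ)) < δ ∧ c.n ≤ N := by
    have h : Tendsto (fun N : ℕ => (2 : ℝ) ^ (-(N : ℤ))) atTop (𝓝 0) := by
      simpa using tendsto_pow_atTop_nhds_zero_of_lt_one (by norm_num : (0 : ℝ) ≤ 1 / 2)
        (by norm_num)
    exact ((h.eventually (gt_mem_nhds hδ)).and (eventually_ge_atTop c.n)).exists
  choose M hMp hM using fun j => (hT.1 j).exists_ge_forall_mem isOpen_Ioo
    (show rlim (X j) ∈ Ioo (c.lowerAt j) (min (rlim (X j) + δ) (c.upperAt j)) from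
      ⟨(hr j).1, lt_min (by linarith) (hr j).2⟩) (c.p j).length
  have hδup : ∀ j, min (rlim (X j)) L + δ ≤ c.upperAt j := fun j => by
    unfold upperAt
    split_ifs with hj
    · linarith [hδr j hj, min_le_left (rlim (X j)) L]
    · linarith [min_le_right (rlim (X j)) L]
  exact ⟨c.shrink X N M L δ, canonicalForm_shrink hT hL hδup, mem_shrink hX hL hN hδ hNδ hM,
    shrink_subset hX hN hMp (by linarith)⟩

theorem stmt13 :
    (∀ (c : BOpen) (X : ℕ → ℕ → ℚ), X ∈ BOSet c →
      ∃ d : BOpen, CanonicalForm d ∧ X ∈ BOSet d ∧ BOSet d ⊆ BOSet c) ∧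
    (∀ c : BOpen,
      BOSet c = ⋃ d ∈ {d : BOpen | CanonicalForm d ∧ BOSet d ⊆ BOSet c}, BOSet d) := by
  refine ⟨exists_canonicalForm_mem_subset, fun c =>
    Subset.antisymm (fun X hX => ?_) (iUnion₂_subset fun d hd => hd.2)⟩
  obtain ⟨d, hd, hXd, hdc⟩ := exists_canonicalForm_mem_subset c X hX
  exact mem_biUnion ⟨hd, hdc⟩ hXd
end
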